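/- For every j ∈ ℕ there is a constant C_j, and for every k ∈ ℕ there is a constant C_k, such that whenever r₁ ≥ 1, r₂ ≥ 1, s ≥ 0 and r₁r₂e^s ≥ (max{r₁,r₂})², one has |(d/ds)^j |𝐧_s|| ≤ C_j (r₁r₂e^s)^{1/2} and |(d/ds)^k (1/|𝐧_s|)| ≤ C_k / |𝐧_s|. -/

import Mathlib

/-!
Writing `c = log (r₁ / r₂)`, one has `|𝐧_s|² = 2 r₁ r₂ (cosh s + cosh c)`, so it suffices to
bound the derivatives of `g(s) = (cosh s + cosh c) ^ p` by multiples of `g`, uniformly in `c`.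
With the logistic functions `x = σ(s + c)` and `y = σ(s - c)` one has `g' = p (x + y - 1) g`,
`x' = x (1 - x)` and `y' = y (1 - y)`, so every derivative of `g` is `g` times a polynomial in
`x, y` whose coefficients do not depend on `c`; since `0 < x, y < 1`, that polynomial is bounded.
For `|𝐧_s|` itself one concludes with `|𝐧_s|² ≤ 4 r₁ r₂ eˢ`, which is where `s ≥ 0` and
`r₁ r₂ eˢ ≥ max(r₁, r₂)²` enter.
-/

/-- `|𝐧_s| = √(r₁² + r₂² + 2 r₁ r₂ cosh s)`. -/
noncomputable def nNorm (r₁ r₂ s : ℝ) : ℝ :=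
  Real.sqrt (r₁ ^ 2 + r₂ ^ 2 + 2 * r₁ * r₂ * Real.cosh s)

open Real

lemma hasDerivAt_sigmoid_pow (m : ℕ) (x : ℝ) :
    HasDerivAt (fun x => sigmoid x ^ m) (m * (1 - sigmoid x) * sigmoid x ^ m) x := by
  refine ((hasDerivAt_sigmoid x).fun_pow m).congr_deriv ?_
  cases m with
  | zero => simp
  | succ m => rw [Nat.add_sub_cancel]; push_cast; ring

lemma sigmoid_add_add_sigmoid_sub (s c : ℝ) :
    sigmoid (s + c) + sigmoid (s - c) - 1 = sinh s / (cosh s + cosh c) := by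
  rw [sigmoid_def, sigmoid_def, sinh_eq, cosh_eq, cosh_eq, neg_add, neg_sub, exp_add, exp_sub,
    exp_neg, exp_neg]
  have := exp_pos s
  have := exp_pos c
  field_simp
  ring

lemma hasDerivAt_rpow_cosh_add_cosh (p c s : ℝ) :
    HasDerivAt (fun s => (cosh s + cosh c) ^ p)
      (p * (sigmoid (s + c) + sigmoid (s - c) - 1) * (cosh s + cosh c) ^ p) s := by
  have hpos : 0 < cosh s + cosh c := by positivity
  convert ((hasDerivAt_cosh s).add_const (cosh c)).rpow_const (p := p) (Or.inl hpos.ne') using 1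
  rw [sigmoid_add_add_sigmoid_sub, rpow_sub_one hpos.ne']
  field_simp

namespace CoshAddCosh

noncomputable def monomial (p : ℝ) (m n : ℕ) (c s : ℝ) : ℝ :=
  (cosh s + cosh c) ^ p * sigmoid (s + c) ^ m * sigmoid (s - c) ^ n

lemma hasDerivAt_monomial (p : ℝ) (m n : ℕ) (c s : ℝ) :
    HasDerivAt (monomial p m n c)
      ((p - m) * monomial p (m + 1) n c s + (p - n) * monomial p m (n + 1) c s
        + (m + n - p) * monomial p m n c s) s := by
  have hm := (hasDerivAt_sigmoid_pow m (s + c)).comp_add_const s c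
  have hn := (hasDerivAt_sigmoid_pow n (s - c)).comp_sub_const s c
  refine (((hasDerivAt_rpow_cosh_add_cosh p c s).fun_mul hm).fun_mul hn).congr_deriv ?_
  unfold monomial
  ring

noncomputable def monomialSpan (p : ℝ) : Submodule ℝ (ℝ → ℝ → ℝ) :=
  Submodule.span ℝ (Set.range fun mn : ℕ × ℕ => monomial p mn.1 mn.2)

lemma monomial_mem_monomialSpan (p : ℝ) (m n : ℕ) : monomial p m n ∈ monomialSpan p :=
  Submodule.subset_span ⟨(m, n), rfl⟩

lemma differentiable_and_deriv_mem_monomialSpan {p : ℝ} {g : ℝ → ℝ → ℝ}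
    (hg : g ∈ monomialSpan p) :
    (∀ c, Differentiable ℝ (g c)) ∧ (fun c => deriv (g c)) ∈ monomialSpan p := by
  induction hg using Submodule.span_induction with
  | mem _ h =>
    obtain ⟨⟨m, n⟩, rfl⟩ := h
    refine ⟨fun c s => (hasDerivAt_monomial p m n c s).differentiableAt, ?_⟩
    have hderiv : (fun c => deriv (monomial p m n c)) =
        (p - m) • monomial p (m + 1) n + (p - n) • monomial p m (n + 1)
          + ((m + n : ℝ) - p) • monomial p m n := by
      ext c s
      exact (hasDerivAt_monomial p m n c s).deriv
    rw [hderiv]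
    exact add_mem (add_mem (Submodule.smul_mem _ _ (monomial_mem_monomialSpan p _ _))
      (Submodule.smul_mem _ _ (monomial_mem_monomialSpan p _ _)))
      (Submodule.smul_mem _ _ (monomial_mem_monomialSpan p _ _))
  | zero =>
    refine ⟨fun _ => differentiable_const 0, ?_⟩
    convert zero_mem (monomialSpan p) using 1
    ext c s
    simp
  | add g h _ _ hg hh =>
    refine ⟨fun c => (hg.1 c).add (hh.1 c), ?_⟩
    convert add_mem hg.2 hh.2 using 1
    ext c s
    exact deriv_add (hg.1 c s) (hh.1 c s)
  | smul a g _ hg =>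
    refine ⟨fun c => (hg.1 c).const_mul a, ?_⟩
    convert Submodule.smul_mem _ a hg.2 using 1
    ext c s
    exact deriv_const_mul a (hg.1 c s)

lemma iteratedDeriv_mem_monomialSpan (p : ℝ) (j : ℕ) :
    (fun c => iteratedDeriv j (fun s => (cosh s + cosh c) ^ p)) ∈ monomialSpan p := by
  induction j with
  | zero =>
    convert monomial_mem_monomialSpan p 0 0 using 1
    ext c s
    simp [monomial]
  | succ j ih =>
    simp only [iteratedDeriv_succ]
    exact (differentiable_and_deriv_mem_monomialSpan ih).2

lemma isBigO_of_mem_monomialSpan {p : ℝ} {g : ℝ → ℝ → ℝ} (hg : g ∈ monomialSpan p) :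
    (fun x : ℝ × ℝ => g x.1 x.2) =O[⊤] fun x => (cosh x.2 + cosh x.1) ^ p := by
  induction hg using Submodule.span_induction with
  | mem _ h =>
    obtain ⟨⟨m, n⟩, rfl⟩ := h
    refine Asymptotics.IsBigO.of_bound 1 (Filter.Eventually.of_forall fun x => ?_)
    have hσ (y : ℝ) (k : ℕ) : ‖sigmoid y ^ k‖ ≤ 1 := by
      rw [norm_pow, Real.norm_of_nonneg (sigmoid_nonneg y)]
      exact pow_le_one₀ (sigmoid_nonneg y) (sigmoid_le_one y)
    simp only [monomial, norm_mul, one_mul]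
    calc _ ≤ ‖(cosh x.2 + cosh x.1) ^ p‖ * 1 * 1 := by gcongr <;> exact hσ _ _
      _ = _ := by ring
  | zero => exact Asymptotics.isBigO_zero _ _
  | add g h _ _ hg hh => exact hg.add hh
  | smul a g _ hg => exact hg.const_mul_left a

theorem exists_abs_iteratedDeriv_rpow_cosh_add_cosh_le (p : ℝ) (j : ℕ) :
    ∃ C > 0, ∀ c s, |iteratedDeriv j (fun s => (cosh s + cosh c) ^ p) s| ≤
      C * (cosh s + cosh c) ^ p := by
  obtain ⟨C, hC, hbound⟩ :=
    (isBigO_of_mem_monomialSpan (iteratedDeriv_mem_monomialSpan p j)).exists_pos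
  refine ⟨C, hC, fun c s => ?_⟩
  have := Asymptotics.isBigOWith_top.1 hbound (c, s)
  rwa [Real.norm_eq_abs, Real.norm_of_nonneg (by positivity)] at this

end CoshAddCosh

lemma two_mul_mul_cosh_add_cosh_log {r₁ r₂ : ℝ} (h₁ : 0 < r₁) (h₂ : 0 < r₂) (s : ℝ) :
    2 * r₁ * r₂ * (cosh s + cosh (log (r₁ / r₂))) = r₁ ^ 2 + r₂ ^ 2 + 2 * r₁ * r₂ * cosh s := by
  rw [cosh_log (div_pos h₁ h₂)]
  field_simp
  ring

lemma nNorm_rpow_eq {r₁ r₂ : ℝ} (h₁ : 0 < r₁) (h₂ : 0 < r₂) (p s : ℝ) :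
    nNorm r₁ r₂ s ^ p =
      (2 * r₁ * r₂) ^ (p / 2) * (cosh s + cosh (log (r₁ / r₂))) ^ (p / 2) := by
  rw [← mul_rpow (by positivity) (by positivity), two_mul_mul_cosh_add_cosh_log h₁ h₂, nNorm,
    sqrt_eq_rpow, ← rpow_mul (by positivity)]
  ring_nf

theorem exists_abs_iteratedDeriv_nNorm_rpow_le (p : ℝ) (j : ℕ) :
    ∃ C > 0, ∀ r₁ r₂ s : ℝ, 0 < r₁ → 0 < r₂ →
      |iteratedDeriv j (fun u => nNorm r₁ r₂ u ^ p) s| ≤ C * nNorm r₁ r₂ s ^ p := by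
  obtain ⟨C, hC, hbound⟩ := CoshAddCosh.exists_abs_iteratedDeriv_rpow_cosh_add_cosh_le (p / 2) j
  refine ⟨C, hC, fun r₁ r₂ s h₁ h₂ => ?_⟩
  simp only [nNorm_rpow_eq h₁ h₂]
  rw [iteratedDeriv_const_mul_field, abs_mul, abs_of_pos (by positivity)]
  calc _ ≤ (2 * r₁ * r₂) ^ (p / 2) * (C * (cosh s + cosh (log (r₁ / r₂))) ^ (p / 2)) := by
        gcongr
        exact hbound _ s
    _ = _ := by ring

lemma nNorm_le_two_mul_rpow {r₁ r₂ s : ℝ} (h₁ : 0 ≤ r₁) (h₂ : 0 ≤ r₂) (hs : 0 ≤ s)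
    (h : max r₁ r₂ ^ 2 ≤ r₁ * r₂ * exp s) :
    nNorm r₁ r₂ s ≤ 2 * (r₁ * r₂ * exp s) ^ ((1 : ℝ) / 2) := by
  have hsq : r₁ ^ 2 + r₂ ^ 2 + 2 * r₁ * r₂ * cosh s ≤ 2 ^ 2 * (r₁ * r₂ * exp s) := by
    have h₁sq : r₁ ^ 2 ≤ max r₁ r₂ ^ 2 := by gcongr; exact le_max_left _ _
    have h₂sq : r₂ ^ 2 ≤ max r₁ r₂ ^ 2 := by gcongr; exact le_max_right _ _
    have hexp : r₁ * r₂ * exp (-s) ≤ r₁ * r₂ * exp s := by gcongr; linarith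
    rw [cosh_eq]
    linarith
  calc nNorm r₁ r₂ s ≤ √(2 ^ 2 * (r₁ * r₂ * exp s)) := sqrt_le_sqrt hsq
    _ = _ := by rw [sqrt_mul (by positivity), sqrt_sq zero_le_two, sqrt_eq_rpow]

/-- Whenever `r₁, r₂ ≥ 1`, `s ≥ 0` and `r₁r₂e^s ≥ (max{r₁,r₂})²`, the `s`-derivatives of
`|𝐧_s|` satisfy `|(d/ds)^j |𝐧_s|| ≤ C_j (r₁r₂e^s)^{1/2}` and those of its reciprocal satisfy
`|(d/ds)^k (1/|𝐧_s|)| ≤ C_k / |𝐧_s|`. -/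
theorem nNorm_deriv_bounds :
    (∀ j : ℕ, ∃ C : ℝ, 0 < C ∧ ∀ r₁ r₂ s : ℝ, 1 ≤ r₁ → 1 ≤ r₂ → 0 ≤ s →
        (max r₁ r₂) ^ 2 ≤ r₁ * r₂ * Real.exp s →
        |iteratedDeriv j (fun u => nNorm r₁ r₂ u) s| ≤
          C * (r₁ * r₂ * Real.exp s) ^ ((1 : ℝ) / 2)) ∧
    (∀ k : ℕ, ∃ C : ℝ, 0 < C ∧ ∀ r₁ r₂ s : ℝ, 1 ≤ r₁ → 1 ≤ r₂ → 0 ≤ s →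
        (max r₁ r₂) ^ 2 ≤ r₁ * r₂ * Real.exp s →
        |iteratedDeriv k (fun u => (nNorm r₁ r₂ u)⁻¹) s| ≤ C / nNorm r₁ r₂ s) := by
  constructor
  · intro j
    obtain ⟨C, hC, hbound⟩ := exists_abs_iteratedDeriv_nNorm_rpow_le 1 j
    refine ⟨C * 2, by positivity, fun r₁ r₂ s h₁ h₂ hs h => ?_⟩
    calc _ ≤ C * nNorm r₁ r₂ s := by
          simpa only [rpow_one] using hbound r₁ r₂ s (by linarith) (by linarith)
      _ ≤ C * (2 * (r₁ * r₂ * exp s) ^ ((1 : ℝ) / 2)) := by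
        gcongr
        exact nNorm_le_two_mul_rpow (by linarith) (by linarith) hs h
      _ = _ := by ring
  · intro k
    obtain ⟨C, hC, hbound⟩ := exists_abs_iteratedDeriv_nNorm_rpow_le (-1) k
    refine ⟨C, hC, fun r₁ r₂ s h₁ h₂ _ _ => ?_⟩
    simpa only [rpow_neg_one, div_eq_mul_inv] using hbound r₁ r₂ s (by linarith) (by linarith)
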